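/- Key-exchange correctness: let K, G, H, M, N be pairwise-chosen matrices over a commutative ring such that G*M = M*G and H*N = N*H. Define K_l = Σ_{r=0}^{l-1} G^{l-1-r} * K * H^r and K_{l,j} = Σ_{s=0}^{j-1} M^{j-1-s} * K_l * N^s; also define K_j = Σ_{s=0}^{j-1} M^{j-1-s} * K * N^s and K_{j,l} = Σ_{r=0}^{l-1} G^{l-1-r} * K_j * H^r. Then K_{l,j} = K_{j,l}, i.e., Alice and Bob compute the same shared key matrix. -/

import Mathlib

open Finset

section Sandwich

variable {A : Type*} [Semiring A]

theorem Commute.mul_mul_mul_comm_sandwich {a b c d : A} (hac : Commute a c) (hbd : Commute b d)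
    (x : A) : a * (c * x * d) * b = c * (a * x * b) * d :=
  calc a * (c * x * d) * b = (a * c) * x * (d * b) := by simp only [mul_assoc]
    _ = (c * a) * x * (b * d) := by rw [hac.eq, hbd.eq]
    _ = c * (a * x * b) * d := by simp only [mul_assoc]

def sandwichGeomSum (G H : A) (l : ℕ) (X : A) : A :=
  ∑ r ∈ range l, G ^ (l - 1 - r) * X * H ^ r

theorem sandwichGeomSum_comm {G H M N : A} (hGM : Commute G M) (hHN : Commute H N)
    (l j : ℕ) (X : A) :
    sandwichGeomSum M N j (sandwichGeomSum G H l X) =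
      sandwichGeomSum G H l (sandwichGeomSum M N j X) := by
  simp only [sandwichGeomSum, mul_sum, sum_mul]
  rw [sum_comm]
  refine sum_congr rfl fun r _ => sum_congr rfl fun s _ => ?_
  exact (hGM.symm.pow_pow _ _).mul_mul_mul_comm_sandwich (hHN.pow_pow _ _).symm X

end Sandwich

theorem key_exchange_correct_general {R : Type*} [CommRing R] {n : ℕ}
    (K G H M N : Matrix (Fin n) (Fin n) R)
    (hGM : G * M = M * G) (hHN : H * N = N * H)
    (l j : ℕ) :
    (∑ s ∈ Finset.range j,
        M ^ (j - 1 - s) * (∑ r ∈ Finset.range l, G ^ (l - 1 - r) * K * H ^ r) * N ^ s)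
      =
    (∑ r ∈ Finset.range l,
        G ^ (l - 1 - r) * (∑ s ∈ Finset.range j, M ^ (j - 1 - s) * K * N ^ s) * H ^ r) :=
  sandwichGeomSum_comm hGM hHN l j K

theorem key_exchange_correct {R : Type*} [CommRing R] {n : ℕ}
    (K G H M N : Matrix (Fin n) (Fin n) R)
    (hGM : G * M = M * G) (hHN : H * N = N * H)
    (l j : ℕ) (hl : 1 ≤ l) (hj : 1 ≤ j) :
    (∑ s ∈ Finset.range j,
        M ^ (j - 1 - s) * (∑ r ∈ Finset.range l, G ^ (l - 1 - r) * K * H ^ r) * N ^ s)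
      =
    (∑ r ∈ Finset.range l,
        G ^ (l - 1 - r) * (∑ s ∈ Finset.range j, M ^ (j - 1 - s) * K * N ^ s) * H ^ r) :=
  key_exchange_correct_general K G H M N hGM hHN l j
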